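/- arXiv:2401.11820 — 2 statements merged into one kernel-verified Lean document; each statement's English description precedes it below -/
import Mathlib

section
/- For independent random variables X and Y each exponentially distributed with rate 1, the CDF of the product Z = XY is F_Z(r) = 1 - 2√r·K₁(2√r) for r > 0, where K₁ is the first-order modified Bessel function of the second kind. -/
open MeasureTheory ProbabilityTheory Real Set Filter Topology Asymptotics

/-- Modified Bessel function of the second kind of order 1, via the integral
representation `K₁(x) = ∫₀^∞ exp (-x * cosh t) * cosh t dt`. -/
noncomputable def besselK1 (x : ℝ) : ℝ :=
  ∫ t in Set.Ioi (0 : ℝ), Real.exp (-x * Real.cosh t) * Real.cosh t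

/-! Conditioning on `X`, `P(XY ≤ r) = ∫₀^∞ e^{-x} (1 - e^{-r/x}) dx = 1 - ∫₀^∞ e^{-(x + r/x)} dx`.
The substitution `x = √r eᵗ` turns `x + r/x` into `2√r cosh t`, and symmetrising the resulting
integral over `ℝ` under `t ↦ -t` replaces the Jacobian `eᵗ` by `cosh t`, which leaves the integral
representation of `2√r K₁(2√r)`. -/

open scoped ENNReal

section ChangeOfVariables

variable {E : Type*} [NormedAddCommGroup E] [NormedSpace ℝ E] {s : ℝ}

lemma image_univ_const_mul_exp (hs : 0 < s) : (fun t => s * exp t) '' univ = Ioi 0 := by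
  ext x
  refine ⟨?_, fun hx => ⟨log (x / s), trivial, ?_⟩⟩
  · rintro ⟨t, -, rfl⟩
    exact mul_pos hs (exp_pos t)
  · change s * exp (log (x / s)) = x
    rw [exp_log (div_pos hx hs)]
    field_simp

lemma injOn_const_mul_exp (hs : 0 < s) : InjOn (fun t => s * exp t) univ :=
  fun _ _ _ _ h => exp_injective (mul_left_cancel₀ hs.ne' h)

theorem integral_comp_const_mul_exp (hs : 0 < s) (g : ℝ → E) :
    ∫ t, (s * exp t) • g (s * exp t) = ∫ x in Ioi 0, g x := by
  rw [← image_univ_const_mul_exp hs, integral_image_eq_integral_abs_deriv_smul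
    MeasurableSet.univ (fun t _ => ((hasDerivAt_exp t).const_mul s).hasDerivWithinAt)
    (injOn_const_mul_exp hs),
    Measure.restrict_univ]
  simp only [abs_of_pos (mul_pos hs (exp_pos _))]

theorem integrable_comp_const_mul_exp_iff (hs : 0 < s) (g : ℝ → E) :
    Integrable (fun t => (s * exp t) • g (s * exp t)) ↔ IntegrableOn g (Ioi 0) := by
  rw [← image_univ_const_mul_exp hs, integrableOn_image_iff_integrableOn_abs_deriv_smul
    MeasurableSet.univ (fun t _ => ((hasDerivAt_exp t).const_mul s).hasDerivWithinAt)
    (injOn_const_mul_exp hs),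
    integrableOn_univ]
  simp only [abs_of_pos (mul_pos hs (exp_pos _))]

end ChangeOfVariables

theorem integral_eq_integral_half_add_comp_neg {f : ℝ → ℝ} (hf : Integrable f) :
    ∫ t, f t = ∫ t, (f t + f (-t)) / 2 := by
  rw [integral_div, integral_add hf hf.comp_neg, integral_neg_eq_self]
  ring

lemma exp_neg_add_div_le {r x : ℝ} (hr : 0 ≤ r) (hx : 0 ≤ x) :
    exp (-(x + r / x)) ≤ exp (-x) := by
  rw [exp_le_exp, neg_le_neg_iff]
  exact le_add_of_nonneg_right (div_nonneg hr hx)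

lemma integrableOn_exp_neg_Ioi_zero : IntegrableOn (fun x : ℝ => exp (-x)) (Ioi 0) := by
  simpa using exp_neg_integrableOn_Ioi 0 one_pos

lemma integrableOn_exp_neg_add_div {r : ℝ} (hr : 0 ≤ r) :
    IntegrableOn (fun x => exp (-(x + r / x))) (Ioi 0) := by
  refine integrableOn_exp_neg_Ioi_zero.mono' (by fun_prop) ?_
  filter_upwards [ae_restrict_mem measurableSet_Ioi] with x hx
  rw [norm_of_nonneg (exp_pos _).le]
  exact exp_neg_add_div_le hr (le_of_lt hx)

theorem integral_exp_neg_add_div {r : ℝ} (hr : 0 < r) :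
    ∫ x in Ioi 0, exp (-(x + r / x)) = 2 * √r * besselK1 (2 * √r) := by
  set s := √r
  have hs : 0 < s := sqrt_pos.2 hr
  have hcosh (t : ℝ) : s * exp t + r / (s * exp t) = 2 * s * cosh t := by
    rw [cosh_eq, exp_neg, ← sq_sqrt hr.le]
    field_simp
    ring
  set f : ℝ → ℝ := fun t => s * exp t * exp (-(2 * s) * cosh t)
  have hf (t : ℝ) : (s * exp t) • exp (-(s * exp t + r / (s * exp t))) = f t := by
    simp only [f, smul_eq_mul, hcosh, neg_mul]
  have hf_int : Integrable f := by
    simpa only [hf] using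
      (integrable_comp_const_mul_exp_iff hs _).2 (integrableOn_exp_neg_add_div hr.le)
  have hf_even (t : ℝ) : (f t + f (-t)) / 2 = s * (exp (-(2 * s) * cosh |t|) * cosh |t|) := by
    rw [cosh_abs]
    simp only [f, cosh_neg]
    rw [cosh_eq t]
    ring
  calc ∫ x in Ioi 0, exp (-(x + r / x))
      = ∫ t, f t := by simp only [← integral_comp_const_mul_exp hs, hf]
    _ = ∫ t, s * (exp (-(2 * s) * cosh |t|) * cosh |t|) := by
        simp only [integral_eq_integral_half_add_comp_neg hf_int, hf_even]
    _ = 2 * s * besselK1 (2 * s) := by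
        rw [integral_comp_abs (f := fun t => s * (exp (-(2 * s) * cosh t) * cosh t)),
          integral_const_mul, besselK1, mul_assoc]

section ExponentialDistribution

variable {rate : ℝ}

lemma expMeasure_Iic (hrate : 0 < rate) {a : ℝ} (ha : 0 ≤ a) :
    expMeasure rate (Iic a) = ENNReal.ofReal (1 - exp (-(rate * a))) := by
  rw [expMeasure, gammaMeasure, withDensity_apply _ measurableSet_Iic]
  exact (lintegral_exponentialPDF_eq_antiDeriv hrate a).trans (if_pos ha ▸ rfl)

lemma lintegral_expMeasure {f : ℝ → ℝ≥0∞} (hf : Measurable f) :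
    ∫⁻ x, f x ∂expMeasure rate =
      ∫⁻ x in Ioi 0, ENNReal.ofReal (rate * exp (-(rate * x))) * f x := by
  have hsupp : (exponentialPDF rate * f).support ⊆ Ici 0 := by
    intro x hx
    by_contra hneg
    exact hx (by rw [Pi.mul_apply, exponentialPDF_of_neg (not_le.1 hneg), zero_mul])
  change ∫⁻ x, f x ∂volume.withDensity (exponentialPDF rate) = _
  have hpdf : Measurable (exponentialPDF rate) :=
    (measurable_exponentialPDFReal rate).ennreal_ofReal
  rw [lintegral_withDensity_eq_lintegral_mul _ hpdf hf,
    ← setLIntegral_eq_of_support_subset hsupp, setLIntegral_congr Ioi_ae_eq_Ici.symm]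
  exact setLIntegral_congr_fun measurableSet_Ioi fun x hx => by
    rw [Pi.mul_apply, exponentialPDF_of_nonneg (le_of_lt hx)]

end ExponentialDistribution

lemma measurableSet_mul_le (r : ℝ) : MeasurableSet {p : ℝ × ℝ | p.1 * p.2 ≤ r} :=
  measurableSet_le (measurable_fst.mul measurable_snd) measurable_const

theorem expMeasure_one_prod_mul_le {r : ℝ} (hr : 0 ≤ r) :
    (expMeasure 1).prod (expMeasure 1) {p : ℝ × ℝ | p.1 * p.2 ≤ r} =
      ENNReal.ofReal (1 - ∫ x in Ioi 0, exp (-(x + r / x))) := by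
  have := isProbabilityMeasure_expMeasure one_pos
  have hslice (x : ℝ) (hx : 0 < x) :
      ENNReal.ofReal (1 * exp (-(1 * x))) * expMeasure 1 (Prod.mk x ⁻¹' {p | p.1 * p.2 ≤ r}) =
        ENNReal.ofReal (exp (-x) - exp (-(x + r / x))) := by
    have hpre : Prod.mk x ⁻¹' {p : ℝ × ℝ | p.1 * p.2 ≤ r} = Iic (r / x) := by
      ext y
      rw [mem_Iic, le_div_iff₀ hx, mul_comm]
      rfl
    rw [hpre, expMeasure_Iic one_pos (div_nonneg hr hx.le), ← ENNReal.ofReal_mul (by positivity),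
      one_mul, one_mul, one_mul, mul_sub, mul_one, ← exp_add, neg_add]
  have hint := integrableOn_exp_neg_add_div hr
  have hint_exp := integrableOn_exp_neg_Ioi_zero
  have hnonneg : 0 ≤ᵐ[volume.restrict (Ioi 0)] fun x => exp (-x) - exp (-(x + r / x)) := by
    filter_upwards [ae_restrict_mem measurableSet_Ioi] with x hx
    exact sub_nonneg.2 (exp_neg_add_div_le hr (le_of_lt hx))
  rw [Measure.prod_apply (measurableSet_mul_le r),
    lintegral_expMeasure (measurable_measure_prodMk_left (measurableSet_mul_le r)),
    setLIntegral_congr_fun measurableSet_Ioi hslice,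
    ← ofReal_integral_eq_lintegral_ofReal (f := fun x => exp (-x) - exp (-(x + r / x)))
      (hint_exp.sub hint) hnonneg,
    integral_sub hint_exp hint, integral_exp_neg_Ioi_zero]

theorem product_exponential_cdf_general {Ω : Type*} [MeasureSpace Ω]
    (X Y : Ω → ℝ) (hXm : Measurable X) (hYm : Measurable Y)
    (hX : Measure.map X ℙ = expMeasure 1) (hY : Measure.map Y ℙ = expMeasure 1)
    (hindep : IndepFun X Y) (r : ℝ) (hr : 0 < r) :
    ℙ {ω | X ω * Y ω ≤ r} =
      ENNReal.ofReal (1 - 2 * Real.sqrt r * besselK1 (2 * Real.sqrt r)) := by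
  have := isProbabilityMeasure_expMeasure one_pos
  have hlaw : Measure.map (fun ω => (X ω, Y ω)) ℙ = (expMeasure 1).prod (expMeasure 1) := by
    rw [(indepFun_iff_map_prod_eq_prod_map_map' hXm.aemeasurable hYm.aemeasurable
      (hX ▸ inferInstance) (hY ▸ inferInstance)).1 hindep, hX, hY]
  rw [← integral_exp_neg_add_div hr, ← expMeasure_one_prod_mul_le hr.le, ← hlaw,
    Measure.map_apply (hXm.prodMk hYm) (measurableSet_mul_le r)]
  rfl

/-- The CDF of the product of two independent unit-rate exponential random variables
is `r ↦ 1 - 2√r·K₁(2√r)` for `r > 0`. -/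
theorem product_exponential_cdf {Ω : Type*} [MeasureSpace Ω]
    [IsProbabilityMeasure (ℙ : Measure Ω)]
    (X Y : Ω → ℝ) (hXm : Measurable X) (hYm : Measurable Y)
    (hX : Measure.map X ℙ = expMeasure 1) (hY : Measure.map Y ℙ = expMeasure 1)
    (hindep : IndepFun X Y) (r : ℝ) (hr : 0 < r) :
    ℙ {ω | X ω * Y ω ≤ r} =
      ENNReal.ofReal (1 - 2 * Real.sqrt r * besselK1 (2 * Real.sqrt r)) :=
  product_exponential_cdf_general X Y hXm hYm hX hY hindep r hr
end

section
/- Let F be a continuous CDF on [0,∞) and θ > 0. Define G(r) = (K(F(r)^{-θ} - 1) + 1)^{-1/θ} for r with F(r) ∈ (0,1]. Then G(r) ≥ F(r)^K for all such r, with equality in the limit θ → 0⁺ (pointwise). -/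
open Real Set Filter Topology

/-- The CDF `G(p) = (K (p^{-θ} - 1) + 1)^{-1/θ}` of the maximum of `K` Clayton-coupled variables,
as a function of their common marginal value `p = F(r)`. -/
noncomputable def claytonMaxCDF (K θ p : ℝ) : ℝ :=
  (K * (p ^ (-θ) - 1) + 1) ^ (-1 / θ)

/-- With `a = p^{-θ} ≥ 1`, Bernoulli's inequality `K (a - 1) + 1 ≤ a^K` is reversed by the
decreasing map `t ↦ t^{-1/θ}`, which sends `a^K` to `p^K`. -/
theorem pow_le_claytonMaxCDF (K : ℕ) {θ p : ℝ} (hθ : 0 < θ) (hp : 0 < p) (hp1 : p ≤ 1) :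
    p ^ K ≤ claytonMaxCDF K θ p := by
  set a := p ^ (-θ) with ha
  have one_le_a : 1 ≤ a := one_le_rpow_of_pos_of_le_one_of_nonpos hp hp1 (by linarith)
  have bernoulli : (K : ℝ) * (a - 1) + 1 ≤ a ^ K := by
    linarith [one_add_mul_sub_le_pow (a := a) (by linarith) K]
  have aK_rpow : (a ^ K) ^ (-1 / θ) = p ^ K := by
    rw [ha, ← rpow_natCast, ← rpow_mul hp.le, ← rpow_mul hp.le,
      show -θ * K * (-1 / θ) = K by field_simp, rpow_natCast]
  calc p ^ K = (a ^ K) ^ (-1 / θ) := aK_rpow.symm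
    _ ≤ ((K : ℝ) * (a - 1) + 1) ^ (-1 / θ) :=
      rpow_le_rpow_of_nonpos (by nlinarith [K.cast_nonneg (α := ℝ)]) bernoulli
        (div_nonpos_of_nonpos_of_nonneg (by norm_num) hθ.le)

/-- A generalisation of `(1 + x)^{1/x} → e`: since `log (f θ) / θ` is a difference quotient of
`log ∘ f` at `0`, it tends to `(log ∘ f)'(0) = f'`. -/
theorem tendsto_rpow_div_of_hasDerivAt {f : ℝ → ℝ} {f' : ℝ} (hf : HasDerivAt f f' 0)
    (hf0 : f 0 = 1) (c : ℝ) :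
    Tendsto (fun θ => f θ ^ (c / θ)) (𝓝[≠] 0) (𝓝 (exp (c * f'))) := by
  have hlog : HasDerivAt (fun θ => log (f θ)) f' 0 := by
    simpa [hf0] using hf.log (by simp [hf0])
  have hslope : Tendsto (fun θ => c * slope (fun θ => log (f θ)) 0 θ) (𝓝[≠] 0)
      (𝓝 (c * f')) :=
    hlog.tendsto_slope.const_mul c
  have hpos : ∀ᶠ θ in 𝓝[≠] 0, 0 < f θ :=
    nhdsWithin_le_nhds (hf.continuousAt.eventually (lt_mem_nhds (by simp [hf0])))
  refine ((continuous_exp.tendsto _).comp hslope).congr' ?_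
  filter_upwards [hpos] with θ hθ
  simp only [Function.comp_apply, slope_def_field, hf0, log_one, sub_zero,
    rpow_def_of_pos hθ]
  ring_nf

theorem hasDerivAt_claytonMaxCDF_base (K : ℝ) {p : ℝ} (hp : 0 < p) :
    HasDerivAt (fun θ : ℝ => K * (p ^ (-θ) - 1) + 1) (-K * log p) 0 := by
  have h := ((hasStrictDerivAt_const_rpow hp (-0)).hasDerivAt.comp 0 (hasDerivAt_neg 0))
  simpa [Function.comp_def] using ((h.sub_const 1).const_mul K).add_const 1

theorem tendsto_claytonMaxCDF (K : ℝ) {p : ℝ} (hp : 0 < p) :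
    Tendsto (fun θ => claytonMaxCDF K θ p) (𝓝[≠] 0) (𝓝 (p ^ K)) := by
  have h := tendsto_rpow_div_of_hasDerivAt (hasDerivAt_claytonMaxCDF_base K hp) (by simp) (-1)
  rwa [show -1 * (-K * log p) = log p * K by ring, ← rpow_def_of_pos hp] at h

theorem clayton_max_cdf_ge_indep_general (K : ℕ) (F : ℝ → ℝ)
    (r : ℝ) (hFr : F r ∈ Set.Ioc (0 : ℝ) 1) :
    (∀ θ : ℝ, 0 < θ →
      F r ^ K ≤ ((K : ℝ) * ((F r) ^ (-θ) - 1) + 1) ^ (-1 / θ)) ∧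
    Tendsto (fun θ : ℝ => ((K : ℝ) * ((F r) ^ (-θ) - 1) + 1) ^ (-1 / θ))
      (𝓝[>] 0) (𝓝 (F r ^ K)) := by
  obtain ⟨hp, hp1⟩ := hFr
  refine ⟨fun θ hθ => pow_le_claytonMaxCDF K hθ hp hp1, ?_⟩
  have h := (tendsto_claytonMaxCDF K hp).mono_left (nhdsGT_le_nhdsNE 0)
  rwa [rpow_natCast] at h

/-- The Clayton-coupled CDF of the maximum dominates the independent one:
`G(r) = (K(F(r)^{-θ} - 1) + 1)^{-1/θ} ≥ F(r)^K`, with equality in the limit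
`θ → 0⁺`. -/
theorem clayton_max_cdf_ge_indep (K : ℕ) (hK : 1 ≤ K) (F : ℝ → ℝ)
    (hmono : Monotone F) (hcont : Continuous F)
    (hrange : ∀ x, F x ∈ Set.Icc (0 : ℝ) 1)
    (r : ℝ) (hFr : F r ∈ Set.Ioc (0 : ℝ) 1) :
    (∀ θ : ℝ, 0 < θ →
      F r ^ K ≤ ((K : ℝ) * ((F r) ^ (-θ) - 1) + 1) ^ (-1 / θ)) ∧
    Tendsto (fun θ : ℝ => ((K : ℝ) * ((F r) ^ (-θ) - 1) + 1) ^ (-1 / θ))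
      (𝓝[>] 0) (𝓝 (F r ^ K)) :=
  clayton_max_cdf_ge_indep_general K F r hFr
end
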